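/- For every well-structured MAP instance G there exists a minimum-cost 2-edge cover D̂2 of G (of cost τ(G)) such that every pendant 2ec-block of D̂2 that is incident to a zero-bridge of D̂2 has cost at least 3. -/

import Mathlib

set_option autoImplicit false

/-!  A formal framework for the Matching Augmentation Problem (MAP):
loopless multigraphs with edge costs in `{0,1}` (given by the predicate
`isZero` marking the zero-edges). -/

/-- A finite loopless multigraph together with `{0,1}` edge costs:
`isZero e` means that the edge `e` has cost zero (otherwise it is a unit-edge). -/
structure CostGraph where
  V : Type
  E : Type
  finV : Finite V
  finE : Finite E
  ends : E → Sym2 V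
  loopless : ∀ e, ¬ (ends e).IsDiag
  isZero : E → Prop

namespace CostGraph

variable (G : CostGraph)

/-- `x` and `y` are joined by an edge of `F` and both lie in the node set `S`. -/
def Adj (S : Set G.V) (F : Set G.E) (x y : G.V) : Prop :=
  x ∈ S ∧ y ∈ S ∧ ∃ e ∈ F, G.ends e = s(x, y)

/-- Reachability in the sub-multigraph with node set `S` and edge set `F`. -/
def Reachable (S : Set G.V) (F : Set G.E) (x y : G.V) : Prop :=
  Relation.ReflTransGen (G.Adj S F) x y

/-- The sub-multigraph with node set `S` and those edges of `F` having both
end nodes in `S` is connected (in particular `S` is nonempty). -/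
def ConnectedOn (S : Set G.V) (F : Set G.E) : Prop :=
  S.Nonempty ∧ ∀ x ∈ S, ∀ y ∈ S, G.Reachable S F x y

/-- The sub-multigraph with node set `S` and edge set `F` is 2-edge-connected:
it has at least two nodes and removing any one edge leaves it connected. -/
def TwoECOn (S : Set G.V) (F : Set G.E) : Prop :=
  1 < S.ncard ∧ G.ConnectedOn S F ∧ ∀ e : G.E, G.ConnectedOn S (F \ {e})

/-- `F` is the edge set of a 2-edge-connected spanning subgraph (2-ECSS) of `G`. -/
def TwoEC (F : Set G.E) : Prop := G.TwoECOn Set.univ F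

/-- The cost of a set of edges: the number of unit-edges in it. -/
noncomputable def cost (F : Set G.E) : ℕ := {e ∈ F | ¬ G.isZero e}.ncard

/-- `opt G` is the minimum cost of a 2-ECSS of `G`. -/
noncomputable def opt : ℕ := sInf (G.cost '' {F | G.TwoEC F})

/-- `F` is a 2-edge cover: every node is incident to at least two edges of `F`. -/
def TwoEdgeCover (F : Set G.E) : Prop :=
  ∀ v : G.V, 2 ≤ {e ∈ F | v ∈ G.ends e}.ncard

/-- `tau G` is the minimum cost of a 2-edge cover of `G`. -/
noncomputable def tau : ℕ := sInf (G.cost '' {F | G.TwoEdgeCover F})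

/-- The zero-edges form a matching: no two distinct zero-edges share an end node. -/
def ZeroMatching : Prop :=
  ∀ e f : G.E, G.isZero e → G.isZero f → e ≠ f → ∀ x : G.V, x ∈ G.ends e → x ∉ G.ends f

/-- A MAP instance: a (finite, loopless) multigraph with `{0,1}` edge costs whose
zero-edges form a matching and which is 2-edge-connected. -/
def IsMAP : Prop := G.ZeroMatching ∧ G.TwoEC Set.univ

/-- The degree of a node: the number of edges incident to it. -/
noncomputable def degree (v : G.V) : ℕ := {e : G.E | v ∈ G.ends e}.ncard

/-- `e, f` form a `{0,1}`-edge-pair: parallel edges, `e` of cost zero, `f` of cost one. -/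
def IsZeroOnePair (e f : G.E) : Prop :=
  e ≠ f ∧ G.ends e = G.ends f ∧ G.isZero e ∧ ¬ G.isZero f

/-- `G` has no `{0,1}`-edge-pairs. -/
def NoZeroOnePair : Prop := ∀ e f, ¬ G.IsZeroOnePair e f

/-- `v` is a cut node: deleting `v` leaves a disconnected (or empty) graph. -/
def IsCutNode (v : G.V) : Prop := ¬ G.ConnectedOn ({v}ᶜ) Set.univ

/-- `{v, w}` is a bad-pair: `vw` is a zero-edge and deleting both `v` and `w`
disconnects the graph. -/
def IsBadPair (v w : G.V) : Prop :=
  (∃ e, G.isZero e ∧ G.ends e = s(v, w)) ∧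
    ¬ G.ConnectedOn (({v, w} : Set G.V)ᶜ) Set.univ

/-- The number of bad-pairs of `G` (counted as unordered pairs). -/
noncomputable def badPairCount : ℕ :=
  {z : Sym2 G.V | ∃ a b, z = s(a, b) ∧ G.IsBadPair a b}.ncard

/-- `C` is (the node set of) a connected component of the sub-multigraph with node
set `S` and edge set `F`. -/
def IsCompOf (S : Set G.V) (F : Set G.E) (C : Set G.V) : Prop :=
  C ⊆ S ∧ C.Nonempty ∧ G.ConnectedOn C F ∧
    ∀ x ∈ C, ∀ y ∈ S, G.Adj S F x y → y ∈ C

/-- `Q` is the node set of a redundant 4-cycle: a 4-cycle `u₁u₂u₃u₄` with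
`V(C) ≠ V(G)`, two non-adjacent edges of cost zero and two non-adjacent nodes
of degree two in `G`. -/
def IsRed4CycleOn (Q : Set G.V) : Prop :=
  ∃ (u₁ u₂ u₃ u₄ : G.V) (e₁ e₂ e₃ e₄ : G.E),
    Q = {u₁, u₂, u₃, u₄} ∧
    u₁ ≠ u₂ ∧ u₁ ≠ u₃ ∧ u₁ ≠ u₄ ∧ u₂ ≠ u₃ ∧ u₂ ≠ u₄ ∧ u₃ ≠ u₄ ∧
    e₁ ≠ e₂ ∧ e₁ ≠ e₃ ∧ e₁ ≠ e₄ ∧ e₂ ≠ e₃ ∧ e₂ ≠ e₄ ∧ e₃ ≠ e₄ ∧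
    G.ends e₁ = s(u₁, u₂) ∧ G.ends e₂ = s(u₂, u₃) ∧
    G.ends e₃ = s(u₃, u₄) ∧ G.ends e₄ = s(u₄, u₁) ∧
    G.isZero e₁ ∧ G.isZero e₃ ∧
    G.degree u₂ = 2 ∧ G.degree u₄ = 2 ∧
    Q ≠ Set.univ

/-- A well-structured MAP instance: no `{0,1}`-edge-pairs, no redundant 4-cycles,
no cut nodes and no bad-pairs. -/
def WellStructured : Prop :=
  G.IsMAP ∧ G.NoZeroOnePair ∧ (∀ Q, ¬ G.IsRed4CycleOn Q) ∧
    (∀ v, ¬ G.IsCutNode v) ∧ (∀ v w, ¬ G.IsBadPair v w)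

/-- `G` is 2-node-connected: more than two nodes and deleting any one node
leaves a connected graph. -/
def TwoNC : Prop :=
  2 < Nat.card G.V ∧ ∀ v : G.V, G.ConnectedOn ({v}ᶜ) Set.univ

/-- Bridge of the sub-multigraph with node set `S` and edge set `F`: an edge of `F`
inside `S` whose removal disconnects its end nodes. -/
def IsBridgeOn (S : Set G.V) (F : Set G.E) (e : G.E) : Prop :=
  e ∈ F ∧ (∀ x ∈ G.ends e, x ∈ S) ∧
    ∀ x y, G.ends e = s(x, y) → ¬ G.Reachable S (F \ {e}) x y

/-- Bridge of the spanning subgraph `(V, F)`. -/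
def IsBridge (F : Set G.E) (e : G.E) : Prop := G.IsBridgeOn Set.univ F e

/-- `B` is (the node set of) a 2ec-block of the spanning subgraph `(V, F)`:
a maximal connected bridgeless subgraph with at least two nodes, equivalently a
connected component with at least two nodes of the graph obtained by deleting
all bridges. -/
def IsTwoECBlock (F : Set G.E) (B : Set G.V) : Prop :=
  G.IsCompOf Set.univ (F \ {e | G.IsBridge F e}) B ∧ 2 ≤ B.ncard

/-- Delete a set `D` of edges. -/
noncomputable def deleteEdges (D : Set G.E) : CostGraph where
  V := G.V
  E := {e : G.E // e ∉ D}
  finV := G.finV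
  finE := by haveI := G.finE; exact Subtype.finite
  ends e := G.ends e.1
  loopless e := G.loopless e.1
  isZero e := G.isZero e.1

/-- The sub-instance induced on a set `S` of nodes. -/
noncomputable def induce (S : Set G.V) : CostGraph where
  V := ↥S
  E := {e : G.E // ∀ x ∈ G.ends e, x ∈ S}
  finV := by haveI := G.finV; exact Subtype.finite
  finE := by haveI := G.finE; exact Subtype.finite
  ends e := (G.ends e.1).pmap Subtype.mk e.2
  loopless e := by
    intro hd
    exact G.loopless e.1
      (by simpa [Sym2.pmap_subtype_map_subtypeVal] using hd.map (f := Subtype.val))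
  isZero e := G.isZero e.1

/-- Contraction of `G` along (the equivalence generated by) a relation `R`:
node classes are identified, and edges joining identified nodes are removed
(no loops are created). -/
noncomputable def contract (R : G.V → G.V → Prop) : CostGraph where
  V := Quotient (Relation.EqvGen.setoid R)
  E := {e : G.E // ¬ (Sym2.map (Quotient.mk (Relation.EqvGen.setoid R)) (G.ends e)).IsDiag}
  finV := by haveI := G.finV; exact Quotient.finite _
  finE := by haveI := G.finE; exact Subtype.finite
  ends e := Sym2.map (Quotient.mk (Relation.EqvGen.setoid R)) (G.ends e.1)
  loopless e := e.2
  isZero e := G.isZero e.1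

/-- The relation identifying the nodes of each redundant 4-cycle. -/
def red4Rel (x y : G.V) : Prop := ∃ Q, G.IsRed4CycleOn Q ∧ x ∈ Q ∧ y ∈ Q

/-- The multigraph obtained from `G` by contracting all redundant 4-cycles. -/
noncomputable def contractRed4 : CostGraph := G.contract G.red4Rel

/-- For a bad-pair `{v,w}` and a bp-component `C`: the sub-instance `C^{v,w}`
induced on `V(C) ∪ {v, w}`. -/
noncomputable def bpUp (v w : G.V) (C : Set G.V) : CostGraph :=
  G.induce (C ∪ {v, w})

/-- For a bad-pair `{v,w}` and a bp-component `C`: the instance `C^⊘`, obtained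
from `C^{v,w}` by contracting the zero-edge `vw` if `C` has at least two nodes,
and equal to `C^{v,w}` if `C` has exactly one node. -/
noncomputable def bpContr (v w : G.V) (C : Set G.V) : CostGraph :=
  if 2 ≤ C.ncard then
    (G.bpUp v w C).contract (fun x y => x.1 = v ∧ y.1 = w)
  else G.bpUp v w C

/-- Every edge of `C^⊘` is an edge of `G`. -/
noncomputable def bpContrEdge (v w : G.V) (C : Set G.V) :
    (G.bpContr v w C).E → G.E := by
  unfold bpContr
  by_cases h : 2 ≤ C.ncard
  · rw [if_pos h]; exact fun e => e.1.1
  · rw [if_neg h]; exact fun e => e.1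

/-- The sub-multigraph `(S, F)` is 2-node-connected. -/
def TwoNCOn (S : Set G.V) (F : Set G.E) : Prop :=
  2 < S.ncard ∧ ∀ v : G.V, G.ConnectedOn (S \ {v}) F

/-- The sub-multigraph `(S, F)` consists of two nodes joined by two parallel edges. -/
def IsParallelPairBlock (S : Set G.V) (F : Set G.E) : Prop :=
  S.ncard = 2 ∧ ∃ e f, e ≠ f ∧ G.ends e = G.ends f ∧ F = {e, f}

/-- `(B i, F i)` (for `i : Fin k`) are the blocks of `G`: each block is 2-node-connected
or a pair of nodes joined by two parallel edges, the edge set of `G` is partitioned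
among the blocks, each `B i` is the set of end nodes of the edges of `F i`, and any
two blocks share at most one node. -/
def IsBlockDecomp {k : ℕ} (B : Fin k → Set G.V) (F : Fin k → Set G.E) : Prop :=
  (∀ i, ∀ e ∈ F i, ∀ x ∈ G.ends e, x ∈ B i) ∧
  (∀ i, B i = {x | ∃ e ∈ F i, x ∈ G.ends e}) ∧
  (Set.univ : Set G.E) = ⋃ i, F i ∧
  (∀ i j, i ≠ j → Disjoint (F i) (F j)) ∧
  (∀ i j, i ≠ j → (B i ∩ B j).ncard ≤ 1) ∧
  (∀ i, G.TwoNCOn (B i) (F i) ∨ G.IsParallelPairBlock (B i) (F i))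

end CostGraph

/-- `TauHatRel G t` holds when `t` is a value of `τ̂` for `G`, i.e. a value obtainable
by the following recursion: if `G` has no redundant 4-cycles and no cut nodes
(so it is well-structured provided it has no `{0,1}`-edge-pairs and no bad-pairs)
then `τ̂(G) = τ(G)`; otherwise contract all (`q`, say) redundant 4-cycles of `G`,
split the resulting graph at its cut nodes into its blocks `G₁, …, G_k`, and set
`τ̂(G) = 2q + τ̂(G₁) + … + τ̂(G_k)`. -/
inductive TauHatRel : CostGraph → ℕ → Prop where
  | base (G : CostGraph)
      (h4 : ∀ Q, ¬ G.IsRed4CycleOn Q) (hc : ∀ v, ¬ G.IsCutNode v) :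
      TauHatRel G G.tau
  | step (G : CostGraph) (k : ℕ)
      (B : Fin k → Set G.contractRed4.V) (F : Fin k → Set G.contractRed4.E)
      (t : Fin k → ℕ)
      (hobstr : (∃ Q, G.IsRed4CycleOn Q) ∨ (∃ v, G.IsCutNode v))
      (hdec : G.contractRed4.IsBlockDecomp B F)
      (ht : ∀ i, TauHatRel (G.contractRed4.induce (B i)) (t i)) :
      TauHatRel G (2 * {Q | G.IsRed4CycleOn Q}.ncard + ∑ i, t i)

namespace CostGraph

/-- `τ̂(G)`: the value associated to `G` by the recursion of `TauHatRel`. -/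
noncomputable def tauHat (G : CostGraph) : ℕ := sInf {t | TauHatRel G t}

open Classical in
/-- The lower bound `lb(G)`: `τ̂(G)` if `G` has no `{0,1}`-edge-pairs, no cut nodes
and no bad-pairs, and `opt(G)` otherwise. -/
noncomputable def lb (G : CostGraph) : ℕ :=
  if G.NoZeroOnePair ∧ (∀ v, ¬ G.IsCutNode v) ∧ (∀ v w, ¬ G.IsBadPair v w)
  then G.tauHat else G.opt

end CostGraph

/-! Among the minimum-cost 2-edge covers choose one that minimises, lexicographically, the number
of disconnected pairs of nodes and then the number of bridges.  Suppose a pendant 2ec-block `B`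
hangs from the zero-bridge `e₀ = uv` (`u ∈ B`) and costs at most 2.  The edges inside `B` form a
2-edge-connected graph in which `u` meets no zero-edge, as zero-edges form a matching; so the two
unit-edges of `B` both end at `u`, and they join `u` to every other node of `B`.  As `u` is not a
cut node, some `x ∈ B \ {u}` has an edge `g = xy` leaving `B`.  Exchanging the unit-edge `ux` for
`g` keeps a 2-edge cover of no larger cost, and it either joins two components or puts `e₀` on a
cycle without creating a bridge, a contradiction. -/

namespace CostGraph

instance (G : CostGraph) : Finite G.V := G.finV

instance (G : CostGraph) : Finite G.E := G.finE

variable {G : CostGraph}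

lemma ends_eq_mk (e : G.E) : ∃ a b, G.ends e = s(a, b) := by
  induction G.ends e using Sym2.ind with
  | _ a b => exact ⟨a, b, rfl⟩

lemma ne_of_ends_eq {e : G.E} {a b : G.V} (h : G.ends e = s(a, b)) : a ≠ b := fun hab =>
  G.loopless e (h ▸ Sym2.mk_isDiag_iff.2 hab)

lemma Adj.symm {S : Set G.V} {F : Set G.E} {x y : G.V} (h : G.Adj S F x y) :
    G.Adj S F y x :=
  let ⟨hx, hy, e, he, hee⟩ := h
  ⟨hy, hx, e, he, hee.trans Sym2.eq_swap⟩

lemma Reachable.symm {S : Set G.V} {F : Set G.E} {x y : G.V} (h : G.Reachable S F x y) :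
    G.Reachable S F y x :=
  Relation.ReflTransGen.mono (fun _ _ => Adj.symm) _ _ h.swap

lemma Reachable.lift {S S' : Set G.V} {F F' : Set G.E}
    (hstep : ∀ a b, G.Adj S F a b → G.Reachable S' F' a b) {x y : G.V}
    (h : G.Reachable S F x y) : G.Reachable S' F' x y :=
  Relation.ReflTransGen.lift' id hstep _ _ h

lemma Reachable.mono {S S' : Set G.V} {F F' : Set G.E} (hS : S ⊆ S') (hF : F ⊆ F')
    {x y : G.V} (h : G.Reachable S F x y) : G.Reachable S' F' x y :=
  Relation.ReflTransGen.mono (fun _ _ ⟨ha, hb, e, he, hee⟩ => ⟨hS ha, hS hb, e, hF he, hee⟩) _ _ h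

lemma reachable_of_ends {F : Set G.E} {e : G.E} {a b : G.V} (he : e ∈ F)
    (hab : G.ends e = s(a, b)) : G.Reachable Set.univ F a b :=
  .single ⟨trivial, trivial, e, he, hab⟩

lemma Reachable.exists_adj_of_mem_of_notMem {S : Set G.V} {F : Set G.E} {T : Set G.V}
    {p q : G.V} (h : G.Reachable S F p q) (hp : p ∈ T) (hq : q ∉ T) :
    ∃ x ∈ T, ∃ y ∉ T, G.Adj S F x y := by
  induction h with
  | refl => exact absurd hp hq
  | @tail b c _ hbc ih =>
    by_cases hb : b ∈ T
    · exact ⟨b, hb, c, hq, hbc⟩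
    · exact ih hb

lemma not_isBridge_of_reachable {F : Set G.E} {e : G.E} {a b : G.V}
    (hab : G.ends e = s(a, b)) (h : G.Reachable Set.univ (F \ {e}) a b) :
    ¬ G.IsBridge F e := fun hbr => hbr.2.2 a b hab h

lemma reachable_of_not_isBridge {F : Set G.E} {e : G.E} (heF : e ∈ F)
    (h : ¬ G.IsBridge F e) {a b : G.V} (hab : G.ends e = s(a, b)) :
    G.Reachable Set.univ (F \ {e}) a b := by
  obtain ⟨x, y, hxy, hr⟩ : ∃ x y, G.ends e = s(x, y) ∧ G.Reachable Set.univ (F \ {e}) x y := by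
    simpa [IsBridge, IsBridgeOn, heF] using h
  rcases Sym2.eq_iff.1 (hxy.symm.trans hab) with ⟨rfl, rfl⟩ | ⟨rfl, rfl⟩
  · exact hr
  · exact hr.symm

lemma Reachable.exists_incident {S : Set G.V} {F : Set G.E} {w q : G.V}
    (h : G.Reachable S F w q) (hne : w ≠ q) : ∃ e ∈ F, w ∈ G.ends e := by
  obtain ⟨z, ⟨-, -, e, he, hends⟩, -⟩ := h.cases_head.resolve_left hne
  exact ⟨e, he, hends ▸ Sym2.mem_mk_left _ _⟩

lemma TwoECOn.two_le_ncard_incident {S : Set G.V} {F : Set G.E} (h : G.TwoECOn S F)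
    {w : G.V} (hw : w ∈ S) : 2 ≤ {e ∈ F | w ∈ G.ends e}.ncard := by
  obtain ⟨q, hq, hqw⟩ := Set.exists_ne_of_one_lt_ncard h.1 w
  obtain ⟨e₁, he₁, hw₁⟩ := (h.2.1.2 w hw q hq).exists_incident hqw.symm
  obtain ⟨e₂, ⟨he₂, he₂₁⟩, hw₂⟩ := ((h.2.2 e₁).2 w hw q hq).exists_incident hqw.symm
  exact (Set.one_lt_ncard_iff).2 ⟨e₂, e₁, ⟨he₂, hw₂⟩, ⟨he₁, hw₁⟩, he₂₁⟩

def edgesWithin (F : Set G.E) (B : Set G.V) : Set G.E := {e ∈ F | ∀ x ∈ G.ends e, x ∈ B}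

lemma Adj.edgesWithin {S : Set G.V} {F : Set G.E} {a b : G.V} (h : G.Adj S F a b) :
    G.Adj S (G.edgesWithin F S) a b := by
  obtain ⟨ha, hb, e, he, hab⟩ := h
  refine ⟨ha, hb, e, ⟨he, fun z hz => ?_⟩, hab⟩
  rcases Sym2.mem_iff.1 (hab ▸ hz) with rfl | rfl
  exacts [ha, hb]

lemma Reachable.edgesWithin {S : Set G.V} {F : Set G.E} {p q : G.V}
    (h : G.Reachable S F p q) : G.Reachable S (G.edgesWithin F S) p q :=
  Relation.ReflTransGen.mono (fun _ _ => Adj.edgesWithin) _ _ h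

def LeavesOnlyVia (F : Set G.E) (B : Set G.V) (u v : G.V) : Prop :=
  ∀ e ∈ F, ∀ c d, G.ends e = s(c, d) → c ∈ B → d ∉ B → c = u ∧ d = v

lemma LeavesOnlyVia.mono {F F' : Set G.E} {B : Set G.V} {u v : G.V}
    (h : G.LeavesOnlyVia F B u v) (hF' : F' ⊆ F) : G.LeavesOnlyVia F' B u v :=
  fun e he => h e (hF' he)

lemma LeavesOnlyVia.compl {F : Set G.E} {B : Set G.V} {u v : G.V}
    (h : G.LeavesOnlyVia F B u v) : G.LeavesOnlyVia F Bᶜ v u := fun e he c d hcd hc hd =>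
  (h e he d c (hcd.trans Sym2.eq_swap) (not_not.1 hd) hc).symm

lemma Reachable.project {F : Set G.E} {B : Set G.V} {u v p q : G.V}
    (hB : G.LeavesOnlyVia F B u v) (h : G.Reachable Set.univ F p q) (hp : p ∈ B) :
    (q ∈ B → G.Reachable B (G.edgesWithin F B) p q) ∧
      (q ∉ B → G.Reachable B (G.edgesWithin F B) p u) := by
  induction h with
  | refl => exact ⟨fun _ => .refl, fun hq => absurd hp hq⟩
  | @tail b c _ hbc ih =>
    obtain ⟨-, -, e, he, hbc⟩ := hbc
    by_cases hb : b ∈ B <;> by_cases hc : c ∈ B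
    · exact ⟨fun _ => (ih.1 hb).tail (Adj.edgesWithin ⟨hb, hc, e, he, hbc⟩),
        fun h => absurd hc h⟩
    · exact ⟨fun h => absurd h hc, fun _ => (hB e he b c hbc hb hc).1 ▸ ih.1 hb⟩
    · exact ⟨fun _ => (hB e he c b (hbc.trans Sym2.eq_swap) hc hb).1 ▸ ih.2 hb,
        fun h => absurd hc h⟩
    · exact ⟨fun h => absurd h hc, fun _ => ih.2 hb⟩

section TwoECBlock

variable {F : Set G.E} {B : Set G.V}

lemma IsTwoECBlock.notMem_of_isBridge (hB : G.IsTwoECBlock F B) {e : G.E} {u v : G.V}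
    (he : G.IsBridge F e) (huv : G.ends e = s(u, v)) (hu : u ∈ B) : v ∉ B := fun hv =>
  he.2.2 u v huv <| (hB.1.2.2.1.2 u hu v hv).mono (F' := F \ {e}) (Set.subset_univ B)
    fun f hf => ⟨hf.1, fun h : f = e => hf.2 (h ▸ he)⟩

lemma IsTwoECBlock.mem_of_not_isBridge (hB : G.IsTwoECBlock F B) {e : G.E} (heF : e ∈ F)
    (he : ¬ G.IsBridge F e) {c d : G.V} (hcd : G.ends e = s(c, d)) (hc : c ∈ B) : d ∈ B :=
  hB.1.2.2.2 c hc d trivial ⟨trivial, trivial, e, ⟨heF, he⟩, hcd⟩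

lemma IsTwoECBlock.leavesOnlyVia (hB : G.IsTwoECBlock F B) {e₀ : G.E} {u v : G.V}
    (hpend : ∀ e, G.IsBridge F e → (∃ x ∈ G.ends e, x ∈ B) → e = e₀)
    (he₀ : G.IsBridge F e₀) (huv : G.ends e₀ = s(u, v)) (hu : u ∈ B) :
    G.LeavesOnlyVia F B u v := by
  intro e heF c d hcd hc hd
  have hbr : G.IsBridge F e := by
    by_contra hnbr
    exact hd (hB.mem_of_not_isBridge heF hnbr hcd hc)
  obtain rfl := hpend e hbr ⟨c, hcd ▸ Sym2.mem_mk_left _ _, hc⟩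
  rcases Sym2.eq_iff.1 (hcd.symm.trans huv) with ⟨rfl, rfl⟩ | ⟨rfl, rfl⟩
  · exact ⟨rfl, rfl⟩
  · exact absurd hc (hB.notMem_of_isBridge he₀ huv hu)

/-- A detour around a non-bridge of the block cannot leave it, since `F` exits only through `u`. -/
lemma IsTwoECBlock.twoECOn_edgesWithin (hB : G.IsTwoECBlock F B) {u v : G.V}
    (hexit : G.LeavesOnlyVia F B u v) : G.TwoECOn B (G.edgesWithin F B) := by
  have hconn : ∀ e', G.ConnectedOn B (G.edgesWithin F B \ {e'}) := by
    refine fun e' => ⟨hB.1.2.1, fun p hp q hq => (hB.1.2.2.1.2 p hp q hq).lift ?_⟩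
    rintro a b ⟨ha, hb, e, ⟨heF, hbr⟩, hab⟩
    have hr : G.Reachable Set.univ (F \ {e'}) a b := by
      by_cases h : e = e'
      · subst h
        exact reachable_of_not_isBridge heF hbr hab
      · exact reachable_of_ends ⟨heF, h⟩ hab
    refine ((hr.project (hexit.mono Set.sdiff_subset) ha).1 hb).mono subset_rfl ?_
    rintro f ⟨⟨hf, hfe'⟩, hfB⟩
    exact ⟨⟨hf, hfB⟩, hfe'⟩
  refine ⟨hB.2, ⟨hB.1.2.1, fun p hp q hq => ?_⟩, hconn⟩
  refine (hB.1.2.2.1.2 p hp q hq).edgesWithin.mono subset_rfl ?_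
  exact fun _ he => ⟨he.1.1, he.2⟩

end TwoECBlock

lemma exists_unit_incident_of_two_le (hmatch : G.ZeroMatching) {I : Set G.E} {w : G.V}
    (hw : 2 ≤ {e ∈ I | w ∈ G.ends e}.ncard) : ∃ f ∈ I, ¬ G.isZero f ∧ w ∈ G.ends f := by
  obtain ⟨e₁, e₂, ⟨he₁, hw₁⟩, ⟨he₂, hw₂⟩, hne⟩ := (Set.one_lt_ncard_iff).1 hw
  by_cases hz₁ : G.isZero e₁
  · exact ⟨e₂, he₂, fun hz₂ => hmatch e₁ e₂ hz₁ hz₂ hne w hw₁ hw₂, hw₂⟩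
  · exact ⟨e₁, he₁, hz₁, hw₁⟩

lemma exists_unit_edge_of_cost_le_two (hmatch : G.ZeroMatching) {I : Set G.E} {B : Set G.V}
    (hI : ∀ w ∈ B, 2 ≤ {e ∈ I | w ∈ G.ends e}.ncard) {u : G.V} (hu : u ∈ B)
    (hu₀ : ∀ e ∈ I, u ∈ G.ends e → ¬ G.isZero e) (hcost : G.cost I ≤ 2)
    {w : G.V} (hw : w ∈ B) (hwu : w ≠ u) : ∃ f ∈ I, ¬ G.isZero f ∧ G.ends f = s(u, w) := by
  obtain ⟨f₁, f₂, ⟨hf₁, hu₁⟩, ⟨hf₂, hu₂⟩, hne⟩ := (Set.one_lt_ncard_iff).1 (hI u hu)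
  have hunit : {e ∈ I | ¬ G.isZero e} = {f₁, f₂} := by
    refine (Set.eq_of_subset_of_ncard_le ?_ ?_).symm
    · rintro e (rfl | rfl)
      exacts [⟨hf₁, hu₀ _ hf₁ hu₁⟩, ⟨hf₂, hu₀ _ hf₂ hu₂⟩]
    · rw [Set.ncard_pair hne]
      exact hcost
  obtain ⟨f, hf, hfz, hwf⟩ := exists_unit_incident_of_two_le hmatch (hI w hw)
  have huf : u ∈ G.ends f := by
    rcases (hunit ▸ (⟨hf, hfz⟩ : f ∈ {e ∈ I | ¬ G.isZero e}) : f ∈ ({f₁, f₂} : Set G.E))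
      with rfl | rfl
    exacts [hu₁, hu₂]
  exact ⟨f, hf, hfz, (Sym2.mem_and_mem_iff hwu.symm).1 ⟨huf, hwf⟩⟩

lemma exists_edge_leaving_of_not_isCutNode {B : Set G.V} {u v x₀ : G.V}
    (hu : ¬ G.IsCutNode u) (hx₀ : x₀ ∈ B) (hx₀u : x₀ ≠ u) (hv : v ∉ B) (hvu : v ≠ u) :
    ∃ g x y, G.ends g = s(x, y) ∧ x ∈ B ∧ x ≠ u ∧ y ∉ B := by
  have hr : G.Reachable {u}ᶜ Set.univ x₀ v := (not_not.1 hu).2 x₀ hx₀u v hvu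
  obtain ⟨x, ⟨hx, hxu⟩, y, hy, -, hyu, g, -, hg⟩ :=
    hr.exists_adj_of_mem_of_notMem (T := B \ {u}) ⟨hx₀, hx₀u⟩ (fun h => hv h.1)
  exact ⟨g, x, y, hg, hx, hxu, fun h => hy ⟨h, hyu⟩⟩

lemma notMem_edgesWithin_of_mem_ends {F : Set G.E} {B : Set G.V} {e : G.E} {c : G.V}
    (hc : c ∈ G.ends e) (hcB : c ∉ B) : e ∉ G.edgesWithin F B := fun he => hcB (he.2 c hc)

lemma notMem_edgesWithin_compl {F F' : Set G.E} {B : Set G.V} {e : G.E}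
    (he : e ∈ G.edgesWithin F B) : e ∉ G.edgesWithin F' Bᶜ := by
  obtain ⟨c, d, hcd⟩ := ends_eq_mk e
  have hc : c ∈ G.ends e := hcd ▸ Sym2.mem_mk_left _ _
  exact notMem_edgesWithin_of_mem_ends hc (not_not.2 (he.2 c hc))

def disconnectedPairs (F : Set G.E) : Set (G.V × G.V) :=
  {p | ¬ G.Reachable Set.univ F p.1 p.2}

def bridges (F : Set G.E) : Set G.E := {e | G.IsBridge F e}

noncomputable def potential (F : Set G.E) : ℕ ×ₗ ℕ :=
  toLex ((G.disconnectedPairs F).ncard, (G.bridges F).ncard)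

lemma potential_lt_of_disconnectedPairs_ssubset {F F' : Set G.E}
    (h : G.disconnectedPairs F' ⊂ G.disconnectedPairs F) : G.potential F' < G.potential F :=
  Prod.Lex.toLex_lt_toLex.2 (Or.inl (Set.ncard_lt_ncard h))

lemma potential_lt_of_bridges_ssubset {F F' : Set G.E}
    (h : G.disconnectedPairs F' ⊆ G.disconnectedPairs F) (hbr : G.bridges F' ⊂ G.bridges F) :
    G.potential F' < G.potential F :=
  Prod.Lex.toLex_lt_toLex'.2 ⟨Set.ncard_le_ncard h, fun _ => Set.ncard_lt_ncard hbr⟩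

section Exchange

variable {F : Set G.E} {B : Set G.V} {e₀ f g : G.E} {u v x y : G.V}

lemma TwoEdgeCover.exchange (hF : G.TwoEdgeCover F) (hf : G.ends f = s(u, x))
    (hu : 2 ≤ {e ∈ insert g (F \ {f}) | u ∈ G.ends e}.ncard)
    (hx : 2 ≤ {e ∈ insert g (F \ {f}) | x ∈ G.ends e}.ncard) :
    G.TwoEdgeCover (insert g (F \ {f})) := by
  intro w
  by_cases hwu : w = u
  · exact hwu ▸ hu
  by_cases hwx : w = x
  · exact hwx ▸ hx
  refine (hF w).trans (Set.ncard_le_ncard ?_)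
  rintro e ⟨heF, hwe⟩
  refine ⟨Or.inr ⟨heF, fun h : e = f => ?_⟩, hwe⟩
  rcases Sym2.mem_iff.1 (hf ▸ h ▸ hwe) with h | h
  exacts [hwu h, hwx h]

lemma cost_exchange_le (hf : f ∈ F) (hfz : ¬ G.isZero f) :
    G.cost (insert g (F \ {f})) ≤ G.cost F := by
  calc G.cost (insert g (F \ {f}))
      ≤ (insert g ({e ∈ F | ¬ G.isZero e} \ {f})).ncard := by
        refine Set.ncard_le_ncard ?_
        rintro e ⟨rfl | ⟨heF, hef⟩, hez⟩
        · exact Set.mem_insert _ _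
        · exact Or.inr ⟨⟨heF, hez⟩, hef⟩
    _ ≤ ({e ∈ F | ¬ G.isZero e} \ {f}).ncard + 1 := Set.ncard_insert_le _ _
    _ = G.cost F := Set.ncard_sdiff_singleton_add_one ⟨hf, hfz⟩

lemma Reachable.exchange {F' : Set G.E} {a b : G.V} (h : G.Reachable Set.univ F a b)
    (hf : G.ends f = s(u, x)) (hux : G.Reachable Set.univ F' u x) (hF' : F \ {f} ⊆ F') :
    G.Reachable Set.univ F' a b := by
  refine h.lift ?_
  rintro a b ⟨-, -, e, he, hab⟩
  by_cases hef : e = f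
  · subst hef
    rcases Sym2.eq_iff.1 (hf.symm.trans hab) with ⟨rfl, rfl⟩ | ⟨rfl, rfl⟩
    exacts [hux, hux.symm]
  · exact reachable_of_ends (hF' ⟨he, hef⟩) hab

lemma bridges_exchange_subset (hf : G.ends f = s(u, x))
    (hux : ∀ e, G.Reachable Set.univ (insert g (F \ {f}) \ {e}) u x)
    (hg : ¬ G.IsBridge (insert g (F \ {f})) g) :
    G.bridges (insert g (F \ {f})) ⊆ G.bridges F := by
  intro e he
  obtain ⟨a, b, hab⟩ := ends_eq_mk e
  have heF : e ∈ F \ {f} := he.1.resolve_left fun h => hg (h ▸ he)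
  by_contra hnbr
  refine he.2.2 a b hab ((reachable_of_not_isBridge heF.1 hnbr hab).exchange hf (hux e) ?_)
  rintro e' ⟨⟨he'F, he'e⟩, he'f⟩
  exact ⟨Or.inr ⟨he'F, he'f⟩, he'e⟩

/-- Every edge misses one of two `u`–`x` walks: the one inside `B`, or `e₀` followed by the
walk outside `B` from `v` to `y` and then `g`. -/
lemma bridges_exchange_ssubset (hexit : G.LeavesOnlyVia F B u v) (hu : u ∈ B) (hv : v ∉ B)
    (he₀ : G.IsBridge F e₀) (huv : G.ends e₀ = s(u, v)) (hf : G.ends f = s(u, x))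
    (he₀f : e₀ ≠ f) (hg : G.ends g = s(x, y)) (hgF : g ∉ F) (hy : y ∉ B)
    (hux : G.Reachable B (G.edgesWithin F B \ {f}) u x) (hyu : G.Reachable Set.univ F y u) :
    G.bridges (insert g (F \ {f})) ⊂ G.bridges F := by
  set F' := insert g (F \ {f})
  have hout : G.Reachable Bᶜ (G.edgesWithin F Bᶜ) y v :=
    (hyu.project hexit.compl hy).2 (not_not.2 hu)
  have hin' : ∀ e ∉ G.edgesWithin F B, G.Reachable Set.univ (F' \ {e}) u x := fun e he =>
    hux.mono (Set.subset_univ B) <| by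
      rintro e' ⟨he'B, he'f⟩
      exact ⟨Or.inr ⟨he'B.1, he'f⟩, fun h : e' = e => he (h ▸ he'B)⟩
  have hout' : ∀ e ∉ G.edgesWithin F Bᶜ, G.Reachable Set.univ (F' \ {e}) y v := fun e he =>
    hout.mono (Set.subset_univ _) <| by
      rintro e' he'
      have hfBc : f ∉ G.edgesWithin F Bᶜ :=
        notMem_edgesWithin_of_mem_ends (hf ▸ Sym2.mem_mk_left _ _) (not_not.2 hu)
      exact ⟨Or.inr ⟨he'.1, fun h : e' = f => hfBc (h ▸ he')⟩, fun h : e' = e => he (h ▸ he')⟩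
  have he₀B : e₀ ∉ G.edgesWithin F B :=
    notMem_edgesWithin_of_mem_ends (huv ▸ Sym2.mem_mk_right _ _) hv
  have he₀Bc : e₀ ∉ G.edgesWithin F Bᶜ :=
    notMem_edgesWithin_of_mem_ends (huv ▸ Sym2.mem_mk_left _ _) (not_not.2 hu)
  have hux' : ∀ e, G.Reachable Set.univ (F' \ {e}) u x := by
    intro e
    by_cases he : e ∈ G.edgesWithin F B
    · have he₀e : e₀ ≠ e := fun h => he₀B (h ▸ he)
      have hge : g ≠ e := fun h => hgF (h ▸ he.1)
      exact ((reachable_of_ends (F := F' \ {e}) ⟨Or.inr ⟨he₀.1, he₀f⟩, he₀e⟩ huv).trans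
        (hout' e (notMem_edgesWithin_compl he)).symm).trans
        (reachable_of_ends ⟨Set.mem_insert g _, hge⟩ (hg.trans Sym2.eq_swap))
    · exact hin' e he
  have hg' : ¬ G.IsBridge F' g := by
    refine not_isBridge_of_reachable hg (((hux' g).symm.trans ?_).trans
      (hout' g fun h => hgF h.1).symm)
    exact reachable_of_ends ⟨Or.inr ⟨he₀.1, he₀f⟩, fun h => hgF (h ▸ he₀.1)⟩ huv
  have he₀' : ¬ G.IsBridge F' e₀ := by
    refine not_isBridge_of_reachable huv (((hux' e₀).trans ?_).trans (hout' e₀ he₀Bc))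
    exact reachable_of_ends ⟨Set.mem_insert g _, fun h => hgF (h ▸ he₀.1)⟩ hg
  exact (Set.ssubset_iff_of_subset (bridges_exchange_subset hf hux' hg')).2 ⟨e₀, he₀, he₀'⟩

lemma potential_exchange_lt (hexit : G.LeavesOnlyVia F B u v) (hu : u ∈ B) (hv : v ∉ B)
    (he₀ : G.IsBridge F e₀) (huv : G.ends e₀ = s(u, v)) (hf : G.ends f = s(u, x))
    (he₀f : e₀ ≠ f) (hg : G.ends g = s(x, y)) (hgF : g ∉ F) (hy : y ∉ B)
    (hux : G.Reachable B (G.edgesWithin F B \ {f}) u x) :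
    G.potential (insert g (F \ {f})) < G.potential F := by
  have hux' : G.Reachable Set.univ (insert g (F \ {f})) u x :=
    hux.mono (Set.subset_univ B) fun _ he => Or.inr ⟨he.1.1, he.2⟩
  have hdisc : G.disconnectedPairs (insert g (F \ {f})) ⊆ G.disconnectedPairs F :=
    fun p hp hF => hp (hF.exchange hf hux' (Set.subset_insert _ _))
  by_cases hyu : G.Reachable Set.univ F y u
  · exact potential_lt_of_bridges_ssubset hdisc <|
      bridges_exchange_ssubset hexit hu hv he₀ huv hf he₀f hg hgF hy hux hyu
  · refine potential_lt_of_disconnectedPairs_ssubset <|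
      (Set.ssubset_iff_of_subset hdisc).2 ⟨(y, u), hyu, fun h => h ?_⟩
    exact (reachable_of_ends (Set.mem_insert g _) (hg.trans Sym2.eq_swap)).trans hux'.symm

end Exchange

lemma exists_twoEdgeCover_potential_lt (hmatch : G.ZeroMatching) {F : Set G.E}
    {B : Set G.V} {e₀ : G.E} {u v : G.V} (hcut : ¬ G.IsCutNode u) (hF : G.TwoEdgeCover F)
    (hB : G.IsTwoECBlock F B) (hpend : ∀ e, G.IsBridge F e → (∃ x ∈ G.ends e, x ∈ B) → e = e₀)
    (he₀ : G.IsBridge F e₀) (hz : G.isZero e₀) (huv : G.ends e₀ = s(u, v)) (hu : u ∈ B)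
    (hcost : G.cost (G.edgesWithin F B) ≤ 2) :
    ∃ F', G.TwoEdgeCover F' ∧ G.cost F' ≤ G.cost F ∧ G.potential F' < G.potential F := by
  have hv : v ∉ B := hB.notMem_of_isBridge he₀ huv hu
  have hexit := hB.leavesOnlyVia hpend he₀ huv hu
  have h2ec := hB.twoECOn_edgesWithin hexit
  have hI : ∀ w ∈ B, 2 ≤ {e ∈ G.edgesWithin F B | w ∈ G.ends e}.ncard :=
    fun w hw => h2ec.two_le_ncard_incident hw
  have he₀B : e₀ ∉ G.edgesWithin F B :=
    notMem_edgesWithin_of_mem_ends (huv ▸ Sym2.mem_mk_right _ _) hv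
  have hu₀ : ∀ e ∈ G.edgesWithin F B, u ∈ G.ends e → ¬ G.isZero e := fun e he hue hez =>
    hmatch e e₀ hez hz (fun h => he₀B (h ▸ he)) u hue (huv ▸ Sym2.mem_mk_left _ _)
  obtain ⟨x₀, hx₀, hx₀u⟩ := Set.exists_ne_of_one_lt_ncard hB.2 u
  obtain ⟨g, x, y, hg, hx, hxu, hy⟩ :=
    exists_edge_leaving_of_not_isCutNode hcut hx₀ hx₀u hv (ne_of_ends_eq huv).symm
  have hgF : g ∉ F := fun hgF => hxu (hexit g hgF x y hg hx hy).1
  obtain ⟨f, hfB, hfz, hf⟩ := exists_unit_edge_of_cost_le_two hmatch hI hu hu₀ hcost hx hxu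
  have hdeg : ∀ w ∈ B, ∀ e' ∈ insert g (F \ {f}), e' ∉ G.edgesWithin F B → w ∈ G.ends e' →
      2 ≤ {e ∈ insert g (F \ {f}) | w ∈ G.ends e}.ncard := by
    intro w hw e' he' he'B hwe'
    obtain ⟨f', ⟨hf'B, hwf'⟩, hf'f⟩ := Set.exists_ne_of_one_lt_ncard (hI w hw) f
    exact (Set.one_lt_ncard_iff).2
      ⟨e', f', ⟨he', hwe'⟩, ⟨Or.inr ⟨hf'B.1, hf'f⟩, hwf'⟩, fun h => he'B (h ▸ hf'B)⟩
  have he₀f : e₀ ≠ f := fun h => hfz (h ▸ hz)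
  refine ⟨insert g (F \ {f}), hF.exchange hf ?_ ?_, cost_exchange_le hfB.1 hfz,
    potential_exchange_lt hexit hu hv he₀ huv hf he₀f hg hgF hy ((h2ec.2.2 f).2 u hu x hx)⟩
  · exact hdeg u hu e₀ (Or.inr ⟨he₀.1, he₀f⟩) he₀B (huv ▸ Sym2.mem_mk_left _ _)
  · exact hdeg x hx g (Set.mem_insert g _) (fun h => hgF h.1) (hg ▸ Sym2.mem_mk_left _ _)

lemma TwoEC.twoEdgeCover_univ (h : G.TwoEC Set.univ) : G.TwoEdgeCover Set.univ :=
  fun _ => TwoECOn.two_le_ncard_incident h trivial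

lemma exists_twoEdgeCover_cost_eq_tau {F : Set G.E} (hF : G.TwoEdgeCover F) :
    ∃ F, G.TwoEdgeCover F ∧ G.cost F = G.tau :=
  Nat.sInf_mem (s := G.cost '' {F | G.TwoEdgeCover F}) ⟨_, F, hF, rfl⟩

lemma tau_le_cost {F : Set G.E} (hF : G.TwoEdgeCover F) : G.tau ≤ G.cost F :=
  Nat.sInf_le ⟨F, hF, rfl⟩

end CostGraph

/-- For every well-structured MAP instance `G` there exists a
minimum-cost 2-edge cover `D̂2` of `G` (of cost `τ(G)`) such that every pendant
2ec-block of `D̂2` that is incident to a zero-bridge of `D̂2` has cost at least 3. -/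
theorem exists_postprocessed_D2 (G : CostGraph) (hG : G.WellStructured) :
    ∃ F : Set G.E, G.TwoEdgeCover F ∧ G.cost F = G.tau ∧
      ∀ B : Set G.V, G.IsTwoECBlock F B →
        {e | G.IsBridge F e ∧ ∃ x ∈ G.ends e, x ∈ B}.ncard = 1 →
        (∃ e, G.IsBridge F e ∧ (∃ x ∈ G.ends e, x ∈ B) ∧ G.isZero e) →
        3 ≤ G.cost {e ∈ F | ∀ x ∈ G.ends e, x ∈ B} := by
  obtain ⟨⟨hmatch, h2ec⟩, -, -, hcut, -⟩ := hG
  obtain ⟨F, ⟨hF, hFτ⟩, hmin⟩ :=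
    Set.exists_min_image {F | G.TwoEdgeCover F ∧ G.cost F = G.tau} G.potential (Set.toFinite _)
      (CostGraph.exists_twoEdgeCover_cost_eq_tau h2ec.twoEdgeCover_univ)
  refine ⟨F, hF, hFτ, ?_⟩
  rintro B hB hpend ⟨e₀, he₀, ⟨u, hu, huB⟩, hz⟩
  by_contra! hcost
  obtain ⟨v, huv⟩ := Sym2.mem_iff_exists.1 hu
  have hpend' : ∀ e, G.IsBridge F e → (∃ x ∈ G.ends e, x ∈ B) → e = e₀ := fun e hbr hmem =>
    (Set.ncard_le_one_iff).1 hpend.le ⟨hbr, hmem⟩ ⟨he₀, u, hu, huB⟩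
  obtain ⟨F', hF', hcostF', hlt⟩ := CostGraph.exists_twoEdgeCover_potential_lt hmatch (hcut u)
    hF hB hpend' he₀ hz huv huB (Nat.lt_succ_iff.1 hcost)
  have hF'τ : G.cost F' = G.tau := le_antisymm (hcostF'.trans hFτ.le) (CostGraph.tau_le_cost hF')
  exact not_lt_of_ge (hmin F' ⟨hF', hF'τ⟩) hlt
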